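/- arXiv:2106.09676 — 9 statements merged into one kernel-verified Lean document; each statement's English description precedes it below -/
import Mathlib

section
/- In a group of exponent 3, for all elements a, b, x, the identity a * (x⁻¹*b*x) = (x⁻¹*(a⁻¹*b*a)*x) * (b*a*b⁻¹) holds. -/
theorem exponent_three_identity (G : Type*) [Group G] (h3 : ∀ g : G, g ^ 3 = 1)
    (a b x : G) :
    a * (x⁻¹ * b * x) = (x⁻¹ * (a⁻¹ * b * a) * x) * (b * a * b⁻¹) := by
  have cube : ∀ g : G, g * g * g = 1 := fun g => by
    have := h3 g; rwa [pow_succ, pow_succ, pow_one] at this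
  have sq : ∀ g : G, g * g = g⁻¹ := fun g => eq_inv_of_mul_eq_one_left (cube g)
  have sq2 : ∀ g : G, g⁻¹ * g⁻¹ = g := fun g => by
    rw [← mul_inv_rev, sq g, inv_inv]
  have L : ∀ u v : G, u * v * u = v⁻¹ * u⁻¹ * v⁻¹ := by
    intro u v
    calc u * v * u = v⁻¹ * ((v*u) * (v*u) * (v*u)) * u⁻¹ * v⁻¹ := by group
      _ = v⁻¹ * 1 * u⁻¹ * v⁻¹ := by rw [cube (v*u)]
      _ = v⁻¹ * u⁻¹ * v⁻¹ := by group
  have key : ∀ c d : G, x * d * x⁻¹ * c = d⁻¹ * c * d * (x * (c * d * c⁻¹) * x⁻¹) := by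
    intro c d
    calc x * d * x⁻¹ * c
        = d⁻¹ * (d * x * d) * x⁻¹ * c := by group
      _ = d⁻¹ * (x⁻¹ * d⁻¹ * x⁻¹) * x⁻¹ * c := by rw [L d x]
      _ = d⁻¹ * x⁻¹ * d⁻¹ * (x⁻¹ * x⁻¹) * c := by group
      _ = d⁻¹ * x⁻¹ * d⁻¹ * x * c := by rw [sq2 x]
      _ = d⁻¹ * x⁻¹ * d⁻¹ * (x * c * x) * x⁻¹ := by group
      _ = d⁻¹ * x⁻¹ * d⁻¹ * (c⁻¹ * x⁻¹ * c⁻¹) * x⁻¹ := by rw [L x c]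
      _ = d⁻¹ * (c*d*x)⁻¹ * (x⁻¹ * c⁻¹ * x⁻¹) := by group
      _ = d⁻¹ * ((c*d*x) * (c*d*x)) * (x⁻¹ * c⁻¹ * x⁻¹) := by rw [sq (c*d*x)]
      _ = d⁻¹ * c * d * (x * (c * d * c⁻¹) * x⁻¹) := by group
  calc a * (x⁻¹ * b * x)
      = x * (x⁻¹*a*x) * x⁻¹ * (x⁻¹*b*x) := by group
    _ = (x⁻¹*a*x)⁻¹ * (x⁻¹*b*x) * (x⁻¹*a*x) *
        (x * ((x⁻¹*b*x) * (x⁻¹*a*x) * (x⁻¹*b*x)⁻¹) * x⁻¹) := key (x⁻¹*b*x) (x⁻¹*a*x)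
    _ = (x⁻¹ * (a⁻¹ * b * a) * x) * (b * a * b⁻¹) := by group
end

section
/- Every group of exponent 3 is an ECP-group, i.e., every subgroup H satisfies H * H^x = H^x * H (as sets) for every element x of the group. -/
open Pointwise

private lemma key_id {G : Type*} [Group G] (h3 : ∀ g : G, g ^ 3 = 1) (c x : G) :
    x * c * x = c⁻¹ * x⁻¹ * c⁻¹ := by
  have h : c * x * (c * x) * (c * x) = 1 := by rw [← h3 (c * x), pow_succ, pow_succ, pow_one]
  calc x * c * x = c⁻¹ * (c * x * (c * x) * (c * x)) * x⁻¹ * c⁻¹ := by group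
    _ = c⁻¹ * 1 * x⁻¹ * c⁻¹ := by rw [h]
    _ = c⁻¹ * x⁻¹ * c⁻¹ := by group

private lemma conj_id {G : Type*} [Group G] (h3 : ∀ g : G, g ^ 3 = 1) (a b x : G) :
    a * (x⁻¹ * b * x) = x⁻¹ * (a⁻¹ * b * a) * x * (b * a * b⁻¹) := by
  have hx2 : x⁻¹ * x⁻¹ = x := by
    have h : x * x * x = 1 := by rw [← h3 x, pow_succ, pow_succ, pow_one]
    calc x⁻¹ * x⁻¹ = x⁻¹ * x⁻¹ * (x * x * x) := by rw [h]; group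
      _ = x := by group
  have k1 := key_id h3 a x
  have k2 := key_id h3 b x
  have k3 := key_id h3 (a⁻¹ * b⁻¹) x⁻¹
  have E : x * (a * (x⁻¹ * b * x)) * (b * a * b⁻¹)⁻¹ * x⁻¹ = a⁻¹ * b * a := by
    calc x * (a * (x⁻¹ * b * x)) * (b * a * b⁻¹)⁻¹ * x⁻¹
        = (x * a * x) * (x⁻¹ * x⁻¹) * b * x * (b * a * b⁻¹)⁻¹ * x⁻¹ := by group
      _ = (a⁻¹ * x⁻¹ * a⁻¹) * (x⁻¹ * x⁻¹) * b * x * (b * a * b⁻¹)⁻¹ * x⁻¹ := by rw [k1]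
      _ = a⁻¹ * x⁻¹ * a⁻¹ * (x * b * x) * ((b * a * b⁻¹)⁻¹ * x⁻¹) := by rw [hx2]; group
      _ = a⁻¹ * x⁻¹ * a⁻¹ * (b⁻¹ * x⁻¹ * b⁻¹) * ((b * a * b⁻¹)⁻¹ * x⁻¹) := by rw [k2]
      _ = a⁻¹ * ((x⁻¹ * (a⁻¹ * b⁻¹) * x⁻¹) * (a⁻¹ * b⁻¹) * x⁻¹) := by group
      _ = a⁻¹ * (((a⁻¹ * b⁻¹)⁻¹ * x⁻¹⁻¹ * (a⁻¹ * b⁻¹)⁻¹) * (a⁻¹ * b⁻¹) * x⁻¹) := by rw [k3]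
      _ = a⁻¹ * b * a := by group
  rw [← E]; group

private lemma conj_id' {G : Type*} [Group G] (h3 : ∀ g : G, g ^ 3 = 1) (c d x : G) :
    (x⁻¹ * c * x) * d = (c⁻¹ * d * c) * (x⁻¹ * (d * c * d⁻¹) * x) := by
  have h := conj_id h3 d⁻¹ c⁻¹ x
  calc (x⁻¹ * c * x) * d
      = (d⁻¹ * (x⁻¹ * c⁻¹ * x))⁻¹ := by group
    _ = (x⁻¹ * (d⁻¹⁻¹ * c⁻¹ * d⁻¹) * x * (c⁻¹ * d⁻¹ * c⁻¹⁻¹))⁻¹ := by rw [h]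
    _ = (c⁻¹ * d * c) * (x⁻¹ * (d * c * d⁻¹) * x) := by group

theorem exponent_three_is_ECP (G : Type*) [Group G] (h3 : ∀ g : G, g ^ 3 = 1)
    (H : Subgroup G) (x : G) :
    (H : Set G) * ((fun g => x⁻¹ * g * x) '' (H : Set G)) =
      ((fun g => x⁻¹ * g * x) '' (H : Set G)) * (H : Set G) := by
  ext g
  simp only [Set.mem_mul, Set.mem_image]
  constructor
  · rintro ⟨a, ha, _, ⟨b, hb, rfl⟩, rfl⟩
    exact ⟨_, ⟨a⁻¹ * b * a, H.mul_mem (H.mul_mem (H.inv_mem ha) hb) ha, rfl⟩,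
      b * a * b⁻¹, H.mul_mem (H.mul_mem hb ha) (H.inv_mem hb),
      (conj_id h3 a b x).symm⟩
  · rintro ⟨_, ⟨c, hc, rfl⟩, d, hd, rfl⟩
    exact ⟨c⁻¹ * d * c, H.mul_mem (H.mul_mem (H.inv_mem hc) hd) hc,
      _, ⟨d * c * d⁻¹, H.mul_mem (H.mul_mem hd hc) (H.inv_mem hd), rfl⟩,
      (conj_id' h3 c d x).symm⟩
end

section
/- In a group of exponent 3, for any subgroup H and any element x, the set product H·(x⁻¹Hx) is contained in (x⁻¹Hx)·H. -/
open Pointwise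

theorem exponent_three_subset (G : Type*) [Group G] (h3 : ∀ g : G, g ^ 3 = 1)
    (H : Subgroup G) (x : G) :
    (H : Set G) * ((fun g => x⁻¹ * g * x) '' (H : Set G)) ⊆
      ((fun g => x⁻¹ * g * x) '' (H : Set G)) * (H : Set G) := by
  have key : ∀ g h : G, g * h * g = h⁻¹ * g⁻¹ * h⁻¹ := by
    intro g h
    have hgh : (g * h) * (g * h) * (g * h) = 1 := by
      simpa [pow_succ, mul_assoc] using h3 (g * h)
    calc g * h * g = (g * h) * (g * h) * (g * h) * (h⁻¹ * g⁻¹ * h⁻¹) := by group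
      _ = 1 * (h⁻¹ * g⁻¹ * h⁻¹) := by rw [hgh]
      _ = h⁻¹ * g⁻¹ * h⁻¹ := one_mul _
  have hx : x * x = x⁻¹ := by
    have hxx : x * x * x = 1 := by simpa [pow_succ, mul_assoc] using h3 x
    calc x * x = x * x * x * x⁻¹ := by group
      _ = 1 * x⁻¹ := by rw [hxx]
      _ = x⁻¹ := one_mul _
  rintro z ⟨a, ha, _, ⟨b, hb, rfl⟩, rfl⟩
  have eq1 : a * (x⁻¹ * b * x) = (x⁻¹ * (a⁻¹ * b * a) * x) * (b * a * b⁻¹) := by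
    apply mul_left_cancel (a := x)
    calc x * (a * (x⁻¹ * b * x)) = (x * a * x) * (x * b * x) := by rw [← hx]; group
      _ = (a⁻¹ * x⁻¹ * a⁻¹) * (b⁻¹ * x⁻¹ * b⁻¹) := by rw [key x a, key x b]
      _ = a⁻¹ * (x⁻¹ * (a⁻¹ * b⁻¹) * x⁻¹) * b⁻¹ := by group
      _ = a⁻¹ * ((a⁻¹ * b⁻¹)⁻¹ * (x⁻¹)⁻¹ * (a⁻¹ * b⁻¹)⁻¹) * b⁻¹ := by
          rw [key x⁻¹ (a⁻¹ * b⁻¹)]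
      _ = x * ((x⁻¹ * (a⁻¹ * b * a) * x) * (b * a * b⁻¹)) := by group
  show a * (x⁻¹ * b * x) ∈ _
  rw [eq1]
  exact Set.mul_mem_mul ⟨a⁻¹ * b * a, mul_mem (mul_mem (inv_mem ha) hb) ha, rfl⟩
    (mul_mem (mul_mem hb ha) (inv_mem hb))
end

section
/- If H is a conjugate-permutable subgroup of a group G and H has prime index in the subgroup H·H^x, then H is normal in H·H^x. -/
/-!
For `k ∈ K`, conjugate-permutability makes `H * k⁻¹Hk` a subgroup, namely `H ⊔ k⁻¹Hk`, lying
between `H` and `K`. Since `[K : H]` is prime, it equals `H` or `K`. In the first case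
`k⁻¹Hk ≤ H`; in the second `k = a * (k⁻¹ b k)` with `a, b ∈ H`, which forces `k = b * a ∈ H`.
-/

open Pointwise

/-- `H` is conjugate-permutable in `G`. -/
def IsConjPermutable {G : Type*} [Group G] (H : Subgroup G) : Prop :=
  ∀ x : G, (H : Set G) * ((fun g => x⁻¹ * g * x) '' (H : Set G)) =
    ((fun g => x⁻¹ * g * x) '' (H : Set G)) * (H : Set G)

namespace Subgroup

variable {G : Type*} [Group G]

theorem coe_sup_of_mul_comm {A B : Subgroup G} (h : (A : Set G) * B = B * A) :
    ((A ⊔ B : Subgroup G) : Set G) = A * B := by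
  have mul_closed : (A * B : Set G) * (A * B) = A * B := by
    calc (A * B : Set G) * (A * B) = A * (B * A) * B := by simp only [mul_assoc]
      _ = (A * A) * (B * B) := by rw [← h]; simp only [mul_assoc]
      _ = A * B := by rw [coe_mul_coe, coe_mul_coe]
  have inv_closed : (A * B : Set G)⁻¹ = A * B := by
    rw [mul_inv_rev, inv_coe_set, inv_coe_set, h]
  let S : Subgroup G :=
    { carrier := A * B
      one_mem' := ⟨1, A.one_mem, 1, B.one_mem, one_mul 1⟩
      mul_mem' := fun ha hb => mul_closed ▸ Set.mul_mem_mul ha hb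
      inv_mem' := fun ha => inv_closed ▸ Set.inv_mem_inv.mpr ha }
  have hS : A ⊔ B ≤ S := sup_le
    (fun a ha => ⟨a, ha, 1, B.one_mem, mul_one a⟩) (fun b hb => ⟨1, A.one_mem, b, hb, one_mul b⟩)
  exact subset_antisymm hS
    (mul_subset (SetLike.coe_subset_coe.mpr le_sup_left) (SetLike.coe_subset_coe.mpr le_sup_right))

theorem eq_or_eq_of_relIndex_prime {H L K : Subgroup G} (hHL : H ≤ L) (hLK : L ≤ K)
    (hp : (H.relIndex K).Prime) : L = H ∨ L = K := by
  rw [← relIndex_mul_relIndex H L K hHL hLK, Nat.prime_mul_iff] at hp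
  rcases hp with ⟨-, hLK'⟩ | ⟨-, hHL'⟩
  · exact Or.inr (le_antisymm hLK (relIndex_eq_one.mp hLK'))
  · exact Or.inl (le_antisymm (relIndex_eq_one.mp hHL') hHL)

theorem coe_conj_inv_smul (H : Subgroup G) (k : G) :
    ((MulAut.conj k⁻¹ • H : Subgroup G) : Set G) = (fun g => k⁻¹ * g * k) '' H := by
  rw [coe_pointwise_smul, ← Set.image_smul]
  congr 1
  funext g
  simp [MulAut.smul_def]

end Subgroup

namespace IsConjPermutable

variable {G : Type*} [Group G] {H : Subgroup G}

theorem coe_sup_conj (hH : IsConjPermutable H) (k : G) :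
    ((H ⊔ MulAut.conj k⁻¹ • H : Subgroup G) : Set G) = H * (fun g => k⁻¹ * g * k) '' H := by
  rw [Subgroup.coe_sup_of_mul_comm] <;> rw [Subgroup.coe_conj_inv_smul]
  exact hH k

theorem conj_mem_of_relIndex_prime (hH : IsConjPermutable H) {K : Subgroup G} (hle : H ≤ K)
    (hp : (H.relIndex K).Prime) {k h : G} (hk : k ∈ K) (hh : h ∈ H) : k⁻¹ * h * k ∈ H := by
  have hconj_le : MulAut.conj k⁻¹ • H ≤ K :=
    Subgroup.conj_smul_le_of_le hle ⟨k⁻¹, K.inv_mem hk⟩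
  have hconj_mem : k⁻¹ * h * k ∈ MulAut.conj k⁻¹ • H := by
    rw [← SetLike.mem_coe, Subgroup.coe_conj_inv_smul]
    exact ⟨h, hh, rfl⟩
  rcases Subgroup.eq_or_eq_of_relIndex_prime le_sup_left (sup_le hle hconj_le) hp with hL | hL
  · exact (le_sup_right.trans hL.le) hconj_mem
  · have hk_sup : k ∈ ((H ⊔ MulAut.conj k⁻¹ • H : Subgroup G) : Set G) := hL ▸ hk
    obtain ⟨a, ha, -, ⟨b, hb, rfl⟩, hab⟩ := hH.coe_sup_conj k ▸ hk_sup
    have hkH : k ∈ H := by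
      have hk_eq : k = b * a := calc
        k = b * k * (a * (k⁻¹ * b * k))⁻¹ * a := by group
        _ = b * a := by rw [show a * (k⁻¹ * b * k) = k from hab]; group
      exact hk_eq ▸ H.mul_mem hb ha
    exact H.mul_mem (H.mul_mem (H.inv_mem hkH) hh) hkH

end IsConjPermutable

theorem prime_index_implies_normal_general {G : Type*} [Group G]
    (H : Subgroup G) (hH : IsConjPermutable H) (K : Subgroup G)
    (hle : H ≤ K) (hprime : Nat.Prime ((H.subgroupOf K).index)) :
    (H.subgroupOf K).Normal := by
  refine (Subgroup.normal_subgroupOf_iff hle).mpr fun h k hh hk => ?_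
  simpa using hH.conj_mem_of_relIndex_prime hle hprime (K.inv_mem hk) hh

theorem prime_index_implies_normal {G : Type*} [Group G]
    (H : Subgroup G) (hH : IsConjPermutable H) (x : G) (K : Subgroup G)
    (hK : (K : Set G) = (H : Set G) * ((fun g => x⁻¹ * g * x) '' (H : Set G)))
    (hle : H ≤ K) (hprime : Nat.Prime ((H.subgroupOf K).index)) :
    (H.subgroupOf K).Normal :=
  prime_index_implies_normal_general H hH K hle hprime
end

section
/- Let H be a conjugate-permutable subgroup of a group G, h ∈ H, and x ∈ G. Then for every i ≥ 1 the iterated commutator [x, h, ..., h] (with i copies of h) lies in the set H·H^{[x,_{i-1} h]}, and consequently H·H^{[x,_i h]} is a subgroup of H·H^{[x,_{i-1} h]}. -/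
open Pointwise

/-- Left-normed iterated commutator: `engel x h 0 = x`,
`engel x h (i+1) = [engel x h i, h] = (engel x h i)⁻¹ * h⁻¹ * (engel x h i) * h`. -/
def engel {G : Type*} [Group G] (x h : G) : ℕ → G
  | 0 => x
  | (i + 1) => (engel x h i)⁻¹ * h⁻¹ * (engel x h i) * h

section Aux

variable {G : Type*} [Group G] (H : Subgroup G)

lemma mem_prod_iff' {y a : G} :
    a ∈ (H : Set G) * ((fun g => y⁻¹ * g * y) '' (H : Set G)) ↔
    ∃ u ∈ H, ∃ v ∈ H, a = u * (y⁻¹ * v * y) := by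
  constructor
  · rintro ⟨u, hu, -, ⟨v, hv, rfl⟩, rfl⟩
    exact ⟨u, hu, v, hv, by group⟩
  · rintro ⟨u, hu, v, hv, rfl⟩
    exact ⟨u, hu, _, ⟨v, hv, rfl⟩, by group⟩

lemma prod_mul_mem (hH : IsConjPermutable H) (y : G) {a b : G}
    (ha : a ∈ (H : Set G) * ((fun g => y⁻¹ * g * y) '' (H : Set G)))
    (hb : b ∈ (H : Set G) * ((fun g => y⁻¹ * g * y) '' (H : Set G))) :
    a * b ∈ (H : Set G) * ((fun g => y⁻¹ * g * y) '' (H : Set G)) := by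
  rw [mem_prod_iff'] at ha hb ⊢
  obtain ⟨a1, ha1, a2, ha2, rfl⟩ := ha
  obtain ⟨b1, hb1, b2, hb2, rfl⟩ := hb
  have hmid : (y⁻¹ * a2 * y) * b1 ∈ (H : Set G) * ((fun g => y⁻¹ * g * y) '' (H : Set G)) := by
    rw [hH y]
    exact ⟨_, ⟨a2, ha2, rfl⟩, b1, hb1, rfl⟩
  rw [mem_prod_iff'] at hmid
  obtain ⟨c1, hc1, c2, hc2, hc⟩ := hmid
  refine ⟨a1 * c1, H.mul_mem ha1 hc1, c2 * b2, H.mul_mem hc2 hb2, ?_⟩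
  have : a1 * (y⁻¹ * a2 * y) * (b1 * (y⁻¹ * b2 * y))
      = a1 * ((y⁻¹ * a2 * y) * b1) * (y⁻¹ * b2 * y) := by group
  rw [this, hc]
  group

lemma prod_inv_mem (hH : IsConjPermutable H) (y : G) {a : G}
    (ha : a ∈ (H : Set G) * ((fun g => y⁻¹ * g * y) '' (H : Set G))) :
    a⁻¹ ∈ (H : Set G) * ((fun g => y⁻¹ * g * y) '' (H : Set G)) := by
  rw [mem_prod_iff'] at ha
  obtain ⟨a1, ha1, a2, ha2, rfl⟩ := ha
  rw [hH y]
  exact ⟨_, ⟨a2⁻¹, H.inv_mem ha2, rfl⟩, a1⁻¹, H.inv_mem ha1, by group⟩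

lemma prod_H_mem (y : G) {a : G} (ha : a ∈ H) :
    a ∈ (H : Set G) * ((fun g => y⁻¹ * g * y) '' (H : Set G)) :=
  (mem_prod_iff' H).2 ⟨a, ha, 1, H.one_mem, by group⟩

end Aux

theorem engel_in_product {G : Type*} [Group G] (H : Subgroup G)
    (hH : IsConjPermutable H) (h : G) (hh : h ∈ H) (x : G) (i : ℕ) (hi : 1 ≤ i) :
    engel x h i ∈
      (H : Set G) * ((fun g => (engel x h (i - 1))⁻¹ * g * (engel x h (i - 1))) '' (H : Set G)) ∧
    (H : Set G) * ((fun g => (engel x h i)⁻¹ * g * (engel x h i)) '' (H : Set G)) ⊆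
      (H : Set G) * ((fun g => (engel x h (i - 1))⁻¹ * g * (engel x h (i - 1))) '' (H : Set G)) := by
  cases i with
  | zero => omega
  | succ j =>
    simp only [Nat.add_sub_cancel]
    set y := engel x h j with hy
    have hz : engel x h (j + 1) = y⁻¹ * h⁻¹ * y * h := rfl
    have h1 : engel x h (j + 1) ∈
        (H : Set G) * ((fun g => y⁻¹ * g * y) '' (H : Set G)) := by
      rw [hz, hH y]
      exact ⟨_, ⟨h⁻¹, H.inv_mem hh, rfl⟩, h, hh, rfl⟩
    refine ⟨h1, ?_⟩
    intro w hw
    rw [mem_prod_iff'] at hw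
    obtain ⟨a, ha, b, hb, rfl⟩ := hw
    exact prod_mul_mem H hH y (prod_H_mem H y ha)
      (prod_mul_mem H hH y (prod_mul_mem H hH y (prod_inv_mem H hH y h1) (prod_H_mem H y hb)) h1)
end

section
/- Let H be a conjugate-permutable subgroup of a finite group G and h ∈ H. If h is an n-left-Engel element of H (i.e., [y,_n h] = 1 for all y ∈ H), and t is the number of prime divisors of |H| counted with multiplicity, then h is an (n+t+1)-left-Engel element of G, i.e., [x,_{n+t+1} h] = 1 for all x ∈ G. -/
open Pointwise

namespace EngelCP

lemma omega_le_of_dvd {a b : ℕ} (h : a ∣ b) (hb : b ≠ 0) :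
    a.primeFactorsList.length ≤ b.primeFactorsList.length := by
  obtain ⟨c, rfl⟩ := h
  have ha : a ≠ 0 := by rintro rfl; simp at hb
  have hc : c ≠ 0 := by rintro rfl; simp at hb
  rw [(Nat.perm_primeFactorsList_mul ha hc).length_eq, List.length_append]
  exact Nat.le_add_right _ _

lemma omega_lt_of_dvd_of_lt {a b : ℕ} (h : a ∣ b) (hb : b ≠ 0) (hlt : a < b) :
    a.primeFactorsList.length < b.primeFactorsList.length := by
  obtain ⟨c, rfl⟩ := h
  have ha : a ≠ 0 := by rintro rfl; simp at hb
  have hc : c ≠ 0 := by rintro rfl; simp at hb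
  have hc1 : c ≠ 1 := by rintro rfl; simp at hlt
  rw [(Nat.perm_primeFactorsList_mul ha hc).length_eq, List.length_append]
  have h1 : c.primeFactorsList ≠ [] := by
    rw [Ne, Nat.primeFactorsList_eq_nil]
    rintro (rfl | rfl) <;> simp_all
  have h2 : 0 < c.primeFactorsList.length := List.length_pos_iff.mpr h1
  omega

variable {G : Type*} [Group G]

lemma engel_add (x h : G) (i j : ℕ) : engel x h (i + j) = engel (engel x h i) h j := by
  induction j with
  | zero => rfl
  | succ j ih => show engel x h ((i + j) + 1) = _; simp only [engel, ih]

lemma engel_one_eq (h : G) (j : ℕ) : engel 1 h j = 1 := by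
  induction j with
  | zero => rfl
  | succ j ih => simp [engel, ih]

lemma engel_one_def (y h : G) : engel y h 1 = y⁻¹ * h⁻¹ * y * h := rfl

/-- conjugate subgroup `y⁻¹ H y` -/
def conjSub (H : Subgroup G) (y : G) : Subgroup G := H.map (MulAut.conj y⁻¹).toMonoidHom

lemma conjSub_coe (H : Subgroup G) (y : G) :
    (conjSub H y : Set G) = (fun g => y⁻¹ * g * y) '' (H : Set G) := by
  rw [conjSub, Subgroup.coe_map]
  funext g
  simp [MulAut.conj]

lemma conjSub_coe' (H : Subgroup G) (y : G) :
    (conjSub H y : Set G) = {y⁻¹} * (H : Set G) * {y} := by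
  rw [conjSub_coe, Set.singleton_mul, Set.mul_singleton, Set.image_image]

lemma mem_conjSub {H : Subgroup G} {y g : G} : g ∈ conjSub H y ↔ ∃ u ∈ H, y⁻¹ * u * y = g := by
  constructor
  · intro hg
    have h1 : g ∈ (conjSub H y : Set G) := hg
    rw [conjSub_coe] at h1
    obtain ⟨u, hu, rfl⟩ := h1
    exact ⟨u, hu, rfl⟩
  · rintro ⟨u, hu, rfl⟩
    have h1 : (fun g => y⁻¹ * g * y) u ∈ (conjSub H y : Set G) := by
      rw [conjSub_coe]; exact Set.mem_image_of_mem _ hu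
    exact h1

lemma card_conjSub (H : Subgroup G) (y : G) : Nat.card (conjSub H y) = Nat.card H :=
  (Nat.card_congr (H.equivMapOfInjective _ (MulEquiv.injective _)).toEquiv).symm

lemma coe_mul_singleton_of_mem {H : Subgroup G} {c : G} (hc : c ∈ H) :
    (H : Set G) * {c} = (H : Set G) := by
  ext g
  rw [Set.mul_singleton]
  constructor
  · rintro ⟨u, hu, rfl⟩; exact H.mul_mem hu hc
  · intro hg; exact ⟨g * c⁻¹, H.mul_mem hg (H.inv_mem hc), by group⟩

/-- The product of two permuting subgroups, as a subgroup. -/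
def mulSubgroup (H L : Subgroup G)
    (hperm : (H : Set G) * (L : Set G) = (L : Set G) * (H : Set G)) : Subgroup G where
  carrier := (H : Set G) * (L : Set G)
  one_mem' := ⟨1, H.one_mem, 1, L.one_mem, one_mul 1⟩
  mul_mem' := by
    rintro a b ⟨u1, hu1, v1, hv1, rfl⟩ ⟨u2, hu2, v2, hv2, rfl⟩
    have h0 : v1 * u2 ∈ (H : Set G) * (L : Set G) := by
      rw [hperm]; exact Set.mul_mem_mul hv1 hu2
    obtain ⟨u3, hu3, v3, hv3, h3⟩ := h0
    refine ⟨u1 * u3, H.mul_mem hu1 hu3, v3 * v2, L.mul_mem hv3 hv2, ?_⟩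
    calc u1 * u3 * (v3 * v2) = u1 * (u3 * v3) * v2 := by group
    _ = u1 * (v1 * u2) * v2 := by rw [show u3 * v3 = v1 * u2 from h3]
    _ = u1 * v1 * (u2 * v2) := by group
  inv_mem' := by
    rintro a ⟨u, hu, v, hv, rfl⟩
    have h0 : v⁻¹ * u⁻¹ ∈ (L : Set G) * (H : Set G) :=
      Set.mul_mem_mul (L.inv_mem hv) (H.inv_mem hu)
    rw [← hperm] at h0
    simpa [mul_inv_rev] using h0

variable {H L : Subgroup G} {hperm : (H : Set G) * (L : Set G) = (L : Set G) * (H : Set G)}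

lemma mulSubgroup_coe : (mulSubgroup H L hperm : Set G) = (H : Set G) * (L : Set G) := rfl

lemma left_le_mulSubgroup : H ≤ mulSubgroup H L hperm := fun g hg =>
  ⟨g, hg, 1, L.one_mem, mul_one g⟩

lemma right_le_mulSubgroup : L ≤ mulSubgroup H L hperm := fun g hg =>
  ⟨1, H.one_mem, g, hg, one_mul g⟩

lemma mem_mulSubgroup_iff {g : G} :
    g ∈ mulSubgroup H L hperm ↔ ∃ a ∈ H, ∃ b ∈ L, a * b = g := Iff.rfl

lemma mulSubgroup_card_dvd [Finite G] :
    Nat.card (mulSubgroup H L hperm) ∣ Nat.card H * Nat.card L := by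
  set K := mulSubgroup H L hperm with hK
  letI : SMul (↥H × ↥L) ↥K :=
    ⟨fun p k => ⟨(p.1 : G) * (k : G) * (p.2 : G)⁻¹,
      K.mul_mem (K.mul_mem (left_le_mulSubgroup p.1.2) k.2)
        (K.inv_mem (right_le_mulSubgroup p.2.2))⟩⟩
  have smul_def : ∀ (p : ↥H × ↥L) (k : ↥K),
      ((p • k : ↥K) : G) = (p.1 : G) * (k : G) * (p.2 : G)⁻¹ := fun _ _ => rfl
  letI : MulAction (↥H × ↥L) ↥K := {
    one_smul := by
      intro k; apply Subtype.ext; rw [smul_def]; simp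
    mul_smul := by
      intro p q k; apply Subtype.ext; rw [smul_def, smul_def, smul_def]
      simp only [Prod.fst_mul, Prod.snd_mul, Subgroup.coe_mul]
      group }
  haveI : MulAction.IsPretransitive (↥H × ↥L) ↥K := by
    constructor
    intro k1 k2
    obtain ⟨a1, ha1, b1, hb1, e1⟩ := mem_mulSubgroup_iff.mp k1.2
    obtain ⟨a2, ha2, b2, hb2, e2⟩ := mem_mulSubgroup_iff.mp k2.2
    refine ⟨(⟨a2 * a1⁻¹, H.mul_mem ha2 (H.inv_mem ha1)⟩,
            ⟨b2⁻¹ * b1, L.mul_mem (L.inv_mem hb2) hb1⟩), ?_⟩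
    apply Subtype.ext
    rw [smul_def]
    show a2 * a1⁻¹ * (k1 : G) * (b2⁻¹ * b1)⁻¹ = (k2 : G)
    rw [← e1, ← e2]
    group
  have h1 := MulAction.index_stabilizer_of_transitive (↥H × ↥L) (⟨1, K.one_mem⟩ : ↥K)
  have h2 := Subgroup.index_dvd_card (MulAction.stabilizer (↥H × ↥L) (⟨1, K.one_mem⟩ : ↥K))
  rw [h1, Nat.card_prod] at h2
  exact h2

lemma descent [Finite G] (H : Subgroup G)
    (hperm : ∀ y : G, (H : Set G) * (conjSub H y : Set G) = (conjSub H y : Set G) * (H : Set G))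
    {h : G} (hh : h ∈ H) (y : G) (hb : y⁻¹ * h⁻¹ * y ∉ H) :
    mulSubgroup H (conjSub H (engel y h 1)) (hperm _) ≤ mulSubgroup H (conjSub H y) (hperm y) ∧
    Nat.card (mulSubgroup H (conjSub H (engel y h 1)) (hperm _)) <
      Nat.card (mulSubgroup H (conjSub H y) (hperm y)) := by
  set b := y⁻¹ * h⁻¹ * y with hbdef
  have hz : engel y h 1 = b * h := engel_one_def y h
  set z := engel y h 1 with hzdef
  have hbmem : b ∈ conjSub H y := mem_conjSub.mpr ⟨h⁻¹, H.inv_mem hh, rfl⟩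
  set Ky := mulSubgroup H (conjSub H y) (hperm y) with hKy
  set Kz := mulSubgroup H (conjSub H z) (hperm z) with hKz
  have hHKy : H ≤ Ky := left_le_mulSubgroup
  have hCKy : conjSub H y ≤ Ky := right_le_mulSubgroup
  have hzKy : z ∈ Ky := by rw [hz]; exact Ky.mul_mem (hCKy hbmem) (hHKy hh)
  have hle : Kz ≤ Ky := by
    intro g hg
    obtain ⟨u, hu, w, hw, rfl⟩ := mem_mulSubgroup_iff.mp hg
    obtain ⟨v, hv, rfl⟩ := mem_conjSub.mp hw
    exact Ky.mul_mem (hHKy hu)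
      (Ky.mul_mem (Ky.mul_mem (Ky.inv_mem hzKy) (hHKy hv)) hzKy)
  refine ⟨hle, ?_⟩
  have hA : (Kz : Set G) = ((H : Set G) * {b⁻¹} * (H : Set G)) * {z} := by
    rw [hKz, mulSubgroup_coe, conjSub_coe' H z]
    have hzi : ({z⁻¹} : Set G) = {h⁻¹} * {b⁻¹} := by
      rw [Set.singleton_mul_singleton, hz, mul_inv_rev]
    rw [hzi]
    simp only [← mul_assoc]
    rw [coe_mul_singleton_of_mem (H.inv_mem hh)]
  have hTsub : (H : Set G) * {b⁻¹} * (H : Set G) ⊆ (Ky : Set G) \ (H : Set G) := by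
    rintro g ⟨p, hp, v, hv, rfl⟩
    obtain ⟨u, hu, c, hc, rfl⟩ := hp
    rw [Set.mem_singleton_iff] at hc; subst hc
    constructor
    · exact Ky.mul_mem (Ky.mul_mem (hHKy hu) (Ky.inv_mem (hCKy hbmem))) (hHKy hv)
    · intro hcon
      apply hb
      have h1 : u⁻¹ * (u * b⁻¹ * v) * v⁻¹ ∈ H :=
        H.mul_mem (H.mul_mem (H.inv_mem hu) hcon) (H.inv_mem hv)
      have h2 : u⁻¹ * (u * b⁻¹ * v) * v⁻¹ = b⁻¹ := by group
      rw [h2] at h1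
      simpa using H.inv_mem h1
  have c1 : Nat.card Kz = (Kz : Set G).ncard := (Nat.card_coe_set_eq _).symm ▸ rfl
  have c2 : Nat.card Ky = (Ky : Set G).ncard := (Nat.card_coe_set_eq _).symm ▸ rfl
  rw [c1, c2, hA, Set.mul_singleton, Set.ncard_image_of_injective _ (mul_left_injective z)]
  have l1 : ((H : Set G) * {b⁻¹} * (H : Set G)).ncard ≤ ((Ky : Set G) \ (H : Set G)).ncard :=
    Set.ncard_le_ncard hTsub (Set.toFinite _)
  have l2 : ((Ky : Set G) \ (H : Set G)).ncard < (Ky : Set G).ncard := by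
    apply Set.ncard_lt_ncard _ (Set.toFinite _)
    constructor
    · exact Set.diff_subset
    · intro hcon
      exact (hcon (Ky.one_mem)).2 H.one_mem
  omega

end EngelCP

open EngelCP in
theorem engel_element_conjugate_permutable {G : Type*} [Group G] [Finite G]
    (H : Subgroup G) (hH : IsConjPermutable H) (h : G) (hh : h ∈ H) (n : ℕ)
    (hEngel : ∀ y ∈ H, engel y h n = 1)
    (t : ℕ) (ht : t = (Nat.card H).primeFactorsList.length) :
    ∀ x : G, engel x h (n + t + 1) = 1 := by
  have hperm : ∀ y : G,
      (H : Set G) * (conjSub H y : Set G) = (conjSub H y : Set G) * (H : Set G) := by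
    intro y; rw [conjSub_coe]; exact hH y
  set K : G → Subgroup G := fun y => mulSubgroup H (conjSub H y) (hperm y) with hKdef
  have hHK : ∀ y : G, H ≤ K y := fun y => left_le_mulSubgroup
  have hCK : ∀ y : G, conjSub H y ≤ K y := fun y => right_le_mulSubgroup
  have cardHpos : 0 < Nat.card H := Nat.card_pos
  have hfin : ∀ (y : G) (m : ℕ), engel y h 1 ∈ H → engel y h (m + n + 1) = 1 := by
    intro y m hz
    have e : m + n + 1 = 1 + (n + m) := by omega
    rw [e, engel_add, engel_add, hEngel _ hz, engel_one_eq]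
  have key : ∀ k : ℕ, ∀ y : G, ∀ d : ℕ, Nat.card (K y) = Nat.card H * d →
      d.primeFactorsList.length ≤ k → engel y h (k + n + 1) = 1 := by
    intro k
    induction k with
    | zero =>
      intro y d hcard hω
      have hKpos : 0 < Nat.card (K y) := Nat.card_pos
      have hd0 : d ≠ 0 := by rintro rfl; rw [Nat.mul_zero] at hcard; omega
      have hd1 : d = 1 := by
        have hnil : d.primeFactorsList = [] :=
          List.length_eq_zero_iff.mp (Nat.le_zero.mp hω)
        rcases (Nat.primeFactorsList_eq_nil d).mp hnil with rfl | rfl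
        · exact absurd rfl hd0
        · rfl
      subst hd1
      rw [Nat.mul_one] at hcard
      have hKH : H = K y :=
        Subgroup.eq_of_le_of_card_ge (hHK y) (le_of_eq hcard)
      have hbH : y⁻¹ * h⁻¹ * y ∈ H := by
        rw [hKH]
        exact hCK y (mem_conjSub.mpr ⟨h⁻¹, H.inv_mem hh, rfl⟩)
      exact hfin y 0 (by rw [engel_one_def]; exact H.mul_mem hbH hh)
    | succ k ih =>
      intro y d hcard hω
      by_cases hbH : y⁻¹ * h⁻¹ * y ∈ H
      · exact hfin y (k + 1) (by rw [engel_one_def]; exact H.mul_mem hbH hh)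
      · obtain ⟨hle, hlt⟩ := descent H hperm hh y hbH
        set z := engel y h 1 with hzdef
        obtain ⟨dz, hdz⟩ := Subgroup.card_dvd_of_le (hHK z)
        have hdvd2 : Nat.card (K z) ∣ Nat.card (K y) := Subgroup.card_dvd_of_le hle
        have hKypos : 0 < Nat.card (K y) := Nat.card_pos
        have hd0 : d ≠ 0 := by rintro rfl; rw [Nat.mul_zero] at hcard; omega
        have hdzd : dz ∣ d := by
          have hmm : Nat.card H * dz ∣ Nat.card H * d := by
            rw [← hdz, ← hcard]; exact hdvd2
          exact (mul_dvd_mul_iff_left (a := Nat.card H) (by omega)).mp hmm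
        have hdzlt : dz < d := by
          have hmm : Nat.card H * dz < Nat.card H * d := by
            rw [← hdz, ← hcard]; exact hlt
          exact Nat.lt_of_mul_lt_mul_left hmm
        have hω' : dz.primeFactorsList.length ≤ k := by
          have := omega_lt_of_dvd_of_lt hdzd hd0 hdzlt
          omega
        have hrec := ih z dz hdz hω'
        have e : (k + 1) + n + 1 = 1 + (k + n + 1) := by omega
        rw [e, engel_add]
        exact hrec
  intro x
  have hdvdK : Nat.card (K x) ∣ Nat.card H * Nat.card H := by
    have := mulSubgroup_card_dvd (H := H) (L := conjSub H x) (hperm := hperm x)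
    rwa [card_conjSub] at this
  obtain ⟨d, hd⟩ := Subgroup.card_dvd_of_le (hHK x)
  have hdH : d ∣ Nat.card H := by
    rw [hd] at hdvdK
    exact (mul_dvd_mul_iff_left (a := Nat.card H) (by omega)).mp hdvdK
  have hωd : d.primeFactorsList.length ≤ t := by
    rw [ht]
    exact omega_le_of_dvd hdH (by omega)
  have hmain := key t x d hd hωd
  have e : n + t + 1 = t + n + 1 := by omega
  rw [e]
  exact hmain
end

section
/- Let G be the group G = ⟨a,b,c,d⟩ with relations a^27 = c^27 = b^9 = d^9 = 1, [a,c]=[a,d]=[b,c]=[b,d]=1, b⁻¹ab = a^4, d⁻¹cd = c^4. Then the cyclic subgroup K = ⟨a^3 b^2 c^3 d⟩ is not conjugate-permutable in G: with x = abcd, the element (x⁻¹kx)·k (for k = a^3b^2c^3d) lies in K^x·K but not in K·K^x. -/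
/-! Sending `a ↦ (t ↦ t + 1)`, `b ↦ (t ↦ 7t)` (and likewise `c`, `d` on a second copy of
`ZMod 27`) defines a homomorphism from `G` to a group of affine permutations: since `7 = 4⁻¹` in `ZMod 27`,
conjugating the translation by `1` by `b` gives the translation by `4`. Non-membership in
`K·K^x` passes from the image back to `G`, and in the image `k` has order dividing `9`, so it
remains to check that none of the `81` products `kʳ·x⁻¹kˢx` equals `x⁻¹kxk`. -/

open Pointwise
open scoped commutatorElement

/-- Relators of `G = ⟨a,b,c,d ∣ a^27 = c^27 = b^9 = d^9 = [a,c] = [a,d] = [b,c] = [b,d] = 1,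
b⁻¹ab = a^4, d⁻¹cd = c^4⟩`, with `a, b, c, d` the generators `0, 1, 2, 3`. -/
def xuRels : Set (FreeGroup (Fin 4)) :=
  { FreeGroup.of 0 ^ 27, FreeGroup.of 2 ^ 27, FreeGroup.of 1 ^ 9, FreeGroup.of 3 ^ 9,
    ⁅FreeGroup.of (0 : Fin 4), FreeGroup.of 2⁆, ⁅FreeGroup.of (0 : Fin 4), FreeGroup.of 3⁆,
    ⁅FreeGroup.of (1 : Fin 4), FreeGroup.of 2⁆, ⁅FreeGroup.of (1 : Fin 4), FreeGroup.of 3⁆,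
    (FreeGroup.of 1)⁻¹ * FreeGroup.of 0 * FreeGroup.of 1 * (FreeGroup.of 0 ^ 4)⁻¹,
    (FreeGroup.of 3)⁻¹ * FreeGroup.of 2 * FreeGroup.of 3 * (FreeGroup.of 2 ^ 4)⁻¹ }

/-- The group of Xu–Zhang's Question 3.12. -/
def XuGroup : Type := PresentedGroup xuRels

instance : Group XuGroup := by unfold XuGroup; infer_instance

/-- The generators. -/
def xa : XuGroup := PresentedGroup.of 0
def xb : XuGroup := PresentedGroup.of 1
def xc : XuGroup := PresentedGroup.of 2
def xd : XuGroup := PresentedGroup.of 3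

open Equiv Subgroup

section ConjugatePermutable

variable {G M : Type*} [Group G] [Group M]

theorem exists_fin_pow_eq_zpow_of_pow_eq_one {g : M} {n : ℕ} [NeZero n] (hg : g ^ n = 1)
    (m : ℤ) : ∃ r : Fin n, g ^ (r : ℕ) = g ^ m := by
  have hn : (0 : ℤ) < n := by exact_mod_cast Nat.pos_of_neZero n
  refine ⟨⟨(m % n).toNat, by have := Int.emod_lt_of_pos m hn; omega⟩, ?_⟩
  rw [← zpow_natCast, Int.toNat_of_nonneg (Int.emod_nonneg m hn.ne'), ← zpow_eq_zpow_emod' m hg]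

theorem MonoidHom.image_zpowers_mul_conj (f : G →* M) (k x : G) :
    f '' ((zpowers k : Set G) * (fun u => x⁻¹ * u * x) '' zpowers k) =
      (zpowers (f k) : Set M) * (fun u => (f x)⁻¹ * u * f x) '' zpowers (f k) := by
  rw [Set.image_mul, Set.image_image, ← MonoidHom.map_zpowers, coe_map, Set.image_image]
  simp only [map_mul, map_inv]

theorem MonoidHom.notMem_zpowers_mul_conj_image_of_map_notMem (f : G →* M) {k x y : G}
    (h : f y ∉ (zpowers (f k) : Set M) * (fun u => (f x)⁻¹ * u * f x) '' zpowers (f k)) :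
    y ∉ (zpowers k : Set G) * (fun u => x⁻¹ * u * x) '' zpowers k := by
  rw [← f.image_zpowers_mul_conj] at h
  exact fun hy => h (Set.mem_image_of_mem f hy)

theorem notMem_zpowers_mul_conj_image {g x y : M} {n : ℕ} [NeZero n] (hg : g ^ n = 1)
    (h : ∀ r s : Fin n, g ^ (r : ℕ) * (x⁻¹ * g ^ (s : ℕ) * x) ≠ y) :
    y ∉ (zpowers g : Set M) * (fun u => x⁻¹ * u * x) '' zpowers g := by
  rintro ⟨_, ⟨m, rfl⟩, _, ⟨_, ⟨m', rfl⟩, rfl⟩, hy⟩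
  obtain ⟨r, hr⟩ := exists_fin_pow_eq_zpow_of_pow_eq_one hg m
  obtain ⟨s, hs⟩ := exists_fin_pow_eq_zpow_of_pow_eq_one hg m'
  exact h r s (by rw [hr, hs]; exact hy)

end ConjugatePermutable

def unitSeven : (ZMod 27)ˣ := ⟨7, 4, by decide, by decide⟩

def xuGenImage : Fin 4 → Perm (ZMod 27) × Perm (ZMod 27)
  | 0 => (Equiv.addRight 1, 1)
  | 1 => (Units.mulRight unitSeven, 1)
  | 2 => (1, Equiv.addRight 1)
  | 3 => (1, Units.mulRight unitSeven)

theorem xuGenImage_rels : ∀ r ∈ xuRels, FreeGroup.lift xuGenImage r = 1 := by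
  intro r hr
  simp only [xuRels, Set.mem_insert_iff, Set.mem_singleton_iff] at hr
  rcases hr with rfl | rfl | rfl | rfl | rfl | rfl | rfl | rfl | rfl | rfl <;>
    simp only [commutatorElement_def, map_mul, map_pow, map_inv, FreeGroup.lift_apply_of] <;>
    decide

def xuAffineRep : XuGroup →* Perm (ZMod 27) × Perm (ZMod 27) :=
  PresentedGroup.toGroup xuGenImage_rels

theorem xuAffineRep_xa : xuAffineRep xa = xuGenImage 0 := PresentedGroup.toGroup.of _
theorem xuAffineRep_xb : xuAffineRep xb = xuGenImage 1 := PresentedGroup.toGroup.of _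
theorem xuAffineRep_xc : xuAffineRep xc = xuGenImage 2 := PresentedGroup.toGroup.of _
theorem xuAffineRep_xd : xuAffineRep xd = xuGenImage 3 := PresentedGroup.toGroup.of _

theorem xuAffineRep_k_pow_nine : xuAffineRep (xa ^ 3 * xb ^ 2 * xc ^ 3 * xd) ^ 9 = 1 := by
  simp only [map_mul, map_pow, xuAffineRep_xa, xuAffineRep_xb, xuAffineRep_xc, xuAffineRep_xd]
  decide +kernel

theorem xuAffineRep_k_pow_mul_conj_ne :
    let k := xa ^ 3 * xb ^ 2 * xc ^ 3 * xd
    let x := xa * xb * xc * xd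
    ∀ r s : Fin 9, xuAffineRep k ^ (r : ℕ) * ((xuAffineRep x)⁻¹ * xuAffineRep k ^ (s : ℕ) *
      xuAffineRep x) ≠ xuAffineRep (x⁻¹ * k * x * k) := by
  simp only [map_mul, map_inv, map_pow, xuAffineRep_xa, xuAffineRep_xb, xuAffineRep_xc,
    xuAffineRep_xd]
  decide +kernel

theorem xuGroup_not_conjugate_permutable :
    let k : XuGroup := xa ^ 3 * xb ^ 2 * xc ^ 3 * xd
    let x : XuGroup := xa * xb * xc * xd
    let K : Subgroup XuGroup := Subgroup.zpowers k
    let Kx : Set XuGroup := (fun g => x⁻¹ * g * x) '' (K : Set XuGroup)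
    (x⁻¹ * k * x) * k ∈ Kx * (K : Set XuGroup) ∧
    (x⁻¹ * k * x) * k ∉ (K : Set XuGroup) * Kx := by
  intro k x K Kx
  exact ⟨Set.mul_mem_mul ⟨k, mem_zpowers k, rfl⟩ (mem_zpowers k),
    xuAffineRep.notMem_zpowers_mul_conj_image_of_map_notMem
      (notMem_zpowers_mul_conj_image xuAffineRep_k_pow_nine xuAffineRep_k_pow_mul_conj_ne)⟩
end

section
/- If H is a subgroup of G such that H is normal in ⟨H, H^x⟩ for every x ∈ G (H is 2-subnormal via conjugates), then H is conjugate-permutable in G. -/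
open Pointwise

/-- The conjugate subgroup `x⁻¹ H x`. -/
def conjSub {G : Type*} [Group G] (x : G) (H : Subgroup G) : Subgroup G :=
  H.map (MulAut.conj x⁻¹).toMonoidHom

lemma mem_conjSub {G : Type*} [Group G] {x : G} {H : Subgroup G} {g : G} :
    g ∈ conjSub x H ↔ ∃ a ∈ H, x⁻¹ * a * x = g := by
  simp [conjSub, Subgroup.mem_map, MulAut.conj_apply]

lemma conj_mem_of_mem_conjSub {G : Type*} [Group G] {H : Subgroup G}
    (hnorm : ∀ x : G, (H.subgroupOf (H ⊔ conjSub x H)).Normal)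
    (x : G) {h k : G} (hh : h ∈ H) (hk : k ∈ conjSub x H) :
    k * h * k⁻¹ ∈ H := by
  have hK : h ∈ H ⊔ conjSub x H := Subgroup.mem_sup_left hh
  have kK : k ∈ H ⊔ conjSub x H := Subgroup.mem_sup_right hk
  have hmem : (⟨h, hK⟩ : (H ⊔ conjSub x H : Subgroup G)) ∈
      H.subgroupOf (H ⊔ conjSub x H) := by
    simpa [Subgroup.mem_subgroupOf]
  have := (hnorm x).conj_mem ⟨h, hK⟩ hmem ⟨k, kK⟩
  simpa [Subgroup.mem_subgroupOf] using this

lemma conj_mem_conjSub {G : Type*} [Group G] {H : Subgroup G}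
    (hnorm : ∀ x : G, (H.subgroupOf (H ⊔ conjSub x H)).Normal)
    (x : G) {h k : G} (hh : h ∈ H) (hk : k ∈ conjSub x H) :
    h * k * h⁻¹ ∈ conjSub x H := by
  obtain ⟨a, ha, rfl⟩ := mem_conjSub.mp hk
  have hb : x * h * x⁻¹ ∈ conjSub x⁻¹ H := by
    rw [mem_conjSub]
    exact ⟨h, hh, by group⟩
  have key : (x * h * x⁻¹) * a * (x * h * x⁻¹)⁻¹ ∈ H :=
    conj_mem_of_mem_conjSub hnorm x⁻¹ ha hb
  rw [mem_conjSub]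
  exact ⟨(x * h * x⁻¹) * a * (x * h * x⁻¹)⁻¹, key, by group⟩

theorem two_subnormal_implies_conjugate_permutable {G : Type*} [Group G]
    (H : Subgroup G) (hnorm : ∀ x : G, (H.subgroupOf (H ⊔ conjSub x H)).Normal) :
    ∀ x : G, (H : Set G) * (conjSub x H : Set G) = (conjSub x H : Set G) * (H : Set G) := by
  intro x
  ext a
  simp only [Set.mem_mul, SetLike.mem_coe]
  constructor
  · rintro ⟨h, hh, k, hk, rfl⟩
    exact ⟨h * k * h⁻¹, conj_mem_conjSub hnorm x hh hk, h, hh, by group⟩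
  · rintro ⟨k, hk, h, hh, rfl⟩
    exact ⟨k * h * k⁻¹, conj_mem_of_mem_conjSub hnorm x hh hk, k, hk, by group⟩
end

section
/- In a group of exponent 3, for all a, b, x: a^x · b = (a⁻¹ba) · (bab⁻¹)^x, where g^x = x⁻¹gx. -/
theorem exponent_three_identity' (G : Type*) [Group G] (h3 : ∀ g : G, g ^ 3 = 1)
    (a b x : G) :
    (x⁻¹ * a * x) * b = (a⁻¹ * b * a) * (x⁻¹ * (b * a * b⁻¹) * x) := by
  have cube : ∀ g : G, g * g * g = 1 := by
    intro g; have h := h3 g; rwa [pow_succ, pow_succ, pow_one] at h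
  have k1 := cube (b⁻¹ * x * a⁻¹)
  have k2 := cube (b * x⁻¹)
  have k3 := cube x
  have k4 := cube (a * x⁻¹)
  calc (x⁻¹ * a * x) * b
      = ((x⁻¹*a*x*b*x⁻¹*b*a⁻¹) * ((b⁻¹*x*a⁻¹)*(b⁻¹*x*a⁻¹)*(b⁻¹*x*a⁻¹)) * (x⁻¹*a*x*b*x⁻¹*b*a⁻¹)⁻¹) *
        ((x⁻¹*a*x) * ((b*x⁻¹)*(b*x⁻¹)*(b*x⁻¹)) * (x⁻¹*a*x)⁻¹) *
        ((x⁻¹*a) * (x*x*x) * (x⁻¹*a)⁻¹) *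
        (x⁻¹ * ((a*x⁻¹)*(a*x⁻¹)*(a*x⁻¹)) * x) *
        ((a⁻¹ * b * a) * (x⁻¹ * (b * a * b⁻¹) * x)) := by group
    _ = (a⁻¹ * b * a) * (x⁻¹ * (b * a * b⁻¹) * x) := by
        rw [k1, k2, k3, k4]; group
end
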